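/- Let A be a finite alphabet with at least two letters, u ∈ A⁺ a nonempty word, π a permutation of A, w a prefix of Pal(u), and let σ be the w-conjugate of ψ_u ∘ π; assume σ is primitive, and let a_min be the minimal letter of σ. Then: (1) if (card A − 1)·(|w| + |σ(a_min)|) = ‖σ‖ − card A, then for every word v that is right special in L(σ), the word σ(v·a_min) is right special in L(σ); and (2) if w = ε, then for every word v that is left special in L(σ), the word σ(v·a_min) belongs to L(σ) and is left special in L(σ). -/
import Mathlib


open List

section EpiDefs

variable {A : Type*}

/-- The episturmian generator ψ_a : a ↦ a, b ↦ ab for b ≠ a, as a map on words. -/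
def psiL [DecidableEq A] (a : A) : List A → List A :=
  fun u => (u.map (fun b => if b = a then [a] else [a, b])).flatten

/-- The episturmian generator ψ̄_a : a ↦ a, b ↦ ba for b ≠ a, as a map on words. -/
def psibarL [DecidableEq A] (a : A) : List A → List A :=
  fun u => (u.map (fun b => if b = a then [a] else [b, a])).flatten

/-- ψ_{u₁⋯uₙ} = ψ_{u₁} ∘ ⋯ ∘ ψ_{uₙ}. -/
def psiW [DecidableEq A] (u : List A) : List A → List A :=
  u.foldr (fun a f => psiL a ∘ f) id

/-- ψ̄_{u₁⋯uₙ} = ψ̄_{u₁} ∘ ⋯ ∘ ψ̄_{uₙ}. -/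
def psibarW [DecidableEq A] (u : List A) : List A → List A :=
  u.foldr (fun a f => psibarL a ∘ f) id

/-- There is a shortest palindrome having `x` as a prefix. -/
theorem exists_isPalClosure (x : List A) :
    ∃ p : List A, (p.reverse = p ∧ x <+: p) ∧
      ∀ q : List A, q.reverse = q → x <+: q → p.length ≤ q.length := by
  classical
  have hex : ∃ n : ℕ, ∃ p : List A, (p.reverse = p ∧ x <+: p) ∧ p.length = n :=
    ⟨(x ++ x.reverse).length, x ++ x.reverse, ⟨by simp, ⟨x.reverse, rfl⟩⟩, rfl⟩
  obtain ⟨p, hp, hlen⟩ := Nat.find_spec hex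
  refine ⟨p, hp, fun q h1 h2 => ?_⟩
  rw [hlen]
  exact Nat.find_le ⟨q, ⟨h1, h2⟩, rfl⟩

/-- `palPlus x = x⁽⁺⁾` is the shortest palindrome having `x` as a prefix. -/
noncomputable def palPlus (x : List A) : List A :=
  Classical.choose (exists_isPalClosure x)

/-- Iterated palindromic closure: Pal(ε) = ε, Pal(ua) = (Pal(u)a)⁽⁺⁾. -/
noncomputable def pal (u : List A) : List A :=
  u.foldl (fun p a => palPlus (p ++ [a])) []

/-- Longest common prefix. -/
def gcp [DecidableEq A] : List A → List A → List A
  | a :: x, b :: y => if a = b then a :: gcp x y else []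
  | _, _ => []

/-- Longest common suffix. -/
def gcs [DecidableEq A] (x y : List A) : List A :=
  (gcp x.reverse y.reverse).reverse

/-- The language of a (primitive) substitution: factors of σⁿ(a). -/
def LangS (σ : List A → List A) : Set (List A) :=
  {x | ∃ (n : ℕ) (a : A), x <:+: σ^[n] [a]}

/-- The language of the episturmian shift directed by `d`. -/
def LangD (d : ℕ → A) : Set (List A) :=
  {x | ∃ n : ℕ, x <:+: pal ((List.range n).map d)}

def LeftSpecial (L : Set (List A)) (v : List A) : Prop :=
  ∃ a b : A, a ≠ b ∧ a :: v ∈ L ∧ b :: v ∈ L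

def RightSpecial (L : Set (List A)) (v : List A) : Prop :=
  ∃ a b : A, a ≠ b ∧ v ++ [a] ∈ L ∧ v ++ [b] ∈ L

/-- The left return set of `u` in the language `L`. -/
def leftReturn (L : Set (List A)) (u : List A) : Set (List A) :=
  {r | r ++ u ∈ L ∧ (∃ s : List A, s ≠ [] ∧ r ++ u = u ++ s) ∧
    ¬∃ p q : List A, p ≠ [] ∧ q ≠ [] ∧ r ++ u = p ++ u ++ q}

/-- The right return set of `u` in the language `L`. -/
def rightReturn (L : Set (List A)) (u : List A) : Set (List A) :=
  {r | u ++ r ∈ L ∧ (∃ p : List A, p ≠ [] ∧ u ++ r = p ++ u) ∧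
    ¬∃ p q : List A, p ≠ [] ∧ q ≠ [] ∧ u ++ r = p ++ u ++ q}

/-- `σ` is an endomorphism of the free monoid A*. -/
def IsListHom (σ : List A → List A) : Prop :=
  ∀ x y : List A, σ (x ++ y) = σ x ++ σ y

/-- Primitivity of a substitution. -/
def IsPrimitiveSubst (σ : List A → List A) : Prop :=
  ∃ k : ℕ, 1 ≤ k ∧ ∀ a b : A, b ∈ σ^[k] [a]

/-- At least two distinct letters occur infinitely often in `d`. -/
def NonDegenerate (d : ℕ → A) : Prop :=
  ∃ a b : A, a ≠ b ∧ (∀ N : ℕ, ∃ n : ℕ, N ≤ n ∧ d n = a) ∧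
    (∀ N : ℕ, ∃ n : ℕ, N ≤ n ∧ d n = b)

end EpiDefs
section Lemmas
variable {A : Type*} [DecidableEq A]

theorem psiL_nil (b : A) : psiL b [] = [] := rfl

theorem psiL_cons (b c : A) (x : List A) :
    psiL b (c :: x) = (if c = b then [b] else [b, c]) ++ psiL b x := rfl

theorem psibarL_nil (b : A) : psibarL b [] = [] := rfl

theorem psibarL_cons (b c : A) (x : List A) :
    psibarL b (c :: x) = (if c = b then [b] else [c, b]) ++ psibarL b x := rfl

theorem psiL_append (b : A) (x y : List A) :
    psiL b (x ++ y) = psiL b x ++ psiL b y := by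
  simp [psiL]

theorem psibarL_append (b : A) (x y : List A) :
    psibarL b (x ++ y) = psibarL b x ++ psibarL b y := by
  simp [psibarL]

theorem psiL_shift (b : A) (x : List A) :
    psiL b x ++ [b] = b :: psibarL b x := by
  induction x with
  | nil => rfl
  | cons c x ih =>
    rw [psiL_cons, psibarL_cons]
    by_cases h : c = b <;> simp [h] at ih ⊢ <;> simp [ih]

theorem psiL_reverse (b : A) (x : List A) :
    (psiL b x).reverse = psibarL b x.reverse := by
  induction x with
  | nil => rfl
  | cons c x ih =>
    rw [psiL_cons, reverse_append, ih, reverse_cons, psibarL_append]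
    by_cases h : c = b <;> simp [h, psibarL_cons, psibarL_nil]

theorem psibarL_injective (b : A) : Function.Injective (psibarL b) := by
  intro x
  induction x with
  | nil =>
    intro y h
    cases y with
    | nil => rfl
    | cons c y =>
      rw [psibarL_nil, psibarL_cons] at h
      by_cases hc : c = b <;> simp [hc] at h
  | cons c x ih =>
    intro y h
    cases y with
    | nil =>
      rw [psibarL_nil, psibarL_cons] at h
      by_cases hc : c = b <;> simp [hc] at h
    | cons d y =>
      rw [psibarL_cons, psibarL_cons] at h
      by_cases hc : c = b <;> by_cases hd : d = b <;>
        simp [hc, hd] at h <;> first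
          | (rw [hc, hd, ih h])
          | (rw [h.1, ih h.2])
          | simp_all

theorem psiL_injective (b : A) : Function.Injective (psiL b) := by
  intro x y h
  have : psiL b x ++ [b] = psiL b y ++ [b] := by rw [h]
  rw [psiL_shift, psiL_shift] at this
  exact psibarL_injective b (by injection this)

theorem psiL_length (b : A) (x : List A) : x.length ≤ (psiL b x).length := by
  induction x with
  | nil => simp [psiL_nil]
  | cons c x ih =>
    rw [psiL_cons, length_append]
    by_cases h : c = b <;> simp [h] <;> omega

theorem psibarL_length_eq (b : A) (x : List A) :
    (psibarL b x).length = (psiL b x).length := by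
  have := congrArg List.length (psiL_shift b x)
  simp at this; omega

theorem psiL_ne_nil (b : A) {x : List A} (hx : x ≠ []) : psiL b x ≠ [] := by
  cases x with
  | nil => exact absurd rfl hx
  | cons c x =>
    rw [psiL_cons]
    by_cases h : c = b <;> simp [h]

theorem psiL_head (b : A) {x : List A} (hx : x ≠ []) :
    ∃ r, psiL b x = b :: r := by
  cases x with
  | nil => exact absurd rfl hx
  | cons c x =>
    rw [psiL_cons]
    by_cases h : c = b <;> simp [h]

/-- image palindromicity transfer -/
theorem psiL_snoc_reverse (b : A) (p : List A) :
    (psiL b p ++ [b]).reverse = psiL b p.reverse ++ [b] := by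
  rw [psiL_shift, reverse_cons]
  have : (psibarL b p).reverse = psiL b p.reverse := by
    have h := psiL_reverse b p.reverse
    rw [reverse_reverse] at h
    rw [← h, reverse_reverse]
  rw [this]

theorem psiL_snoc_palindrome (b : A) {p : List A} (hp : p.reverse = p) :
    (psiL b p ++ [b]).reverse = psiL b p ++ [b] := by
  rw [psiL_snoc_reverse, hp]

theorem palindrome_of_psiL_snoc (b : A) {p : List A}
    (hp : (psiL b p ++ [b]).reverse = psiL b p ++ [b]) : p.reverse = p := by
  rw [psiL_snoc_reverse] at hp
  exact psiL_injective b (by simpa using hp)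

end Lemmas
section PalLemmas
variable {A : Type*}

theorem palPlus_palindrome (x : List A) : (palPlus x).reverse = palPlus x :=
  (Classical.choose_spec (exists_isPalClosure x)).1.1

theorem palPlus_prefix (x : List A) : x <+: palPlus x :=
  (Classical.choose_spec (exists_isPalClosure x)).1.2

theorem palPlus_min (x : List A) {q : List A} (h1 : q.reverse = q) (h2 : x <+: q) :
    (palPlus x).length ≤ q.length :=
  (Classical.choose_spec (exists_isPalClosure x)).2 q h1 h2

theorem palPlus_singleton (c : A) : palPlus [c] = [c] := by
  have h1 := palPlus_prefix [c]
  have h2 := palPlus_min [c] (q := [c]) (by simp) (by simp)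
  have : (palPlus [c]).length = 1 := le_antisymm h2 h1.length_le
  obtain ⟨t, ht⟩ := h1
  rw [← ht] at this ⊢
  simp at this
  simp [this]

theorem getElem_idx_congr (l : List A) {i j : ℕ} (h : i = j) (hi : i < l.length) :
    l[i] = l[j]'(h ▸ hi) := by subst h; rfl

theorem pal_getElem {q : List A} (hq : q.reverse = q) (i : ℕ) (hi : i < q.length) :
    q[i] = q[q.length - 1 - i]'(by omega) := by
  have h1 : q.reverse[i]? = q[i]? := by rw [hq]
  rw [List.getElem?_reverse hi] at h1
  rw [List.getElem?_eq_getElem (l := q) (by omega), List.getElem?_eq_getElem hi] at h1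
  exact (Option.some_inj.mp h1).symm

/-- L2: palindromes with a common prefix `y` and equal length `≤ 2|y|` coincide. -/
theorem palindrome_unique {y q₁ q₂ : List A} (h₁ : q₁.reverse = q₁) (h₂ : q₂.reverse = q₂)
    (p₁ : y <+: q₁) (p₂ : y <+: q₂) (hlen : q₁.length = q₂.length)
    (hle : q₁.length ≤ 2 * y.length) : q₁ = q₂ := by
  have hn₁ : y.length ≤ q₁.length := p₁.length_le
  apply List.ext_getElem hlen
  intro i hi1 hi2
  by_cases h : i < y.length
  · rw [← p₁.getElem h, ← p₂.getElem h]
  · push_neg at h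
    have e1 : q₁[i] = y[q₁.length - 1 - i]'(by omega) := by
      rw [pal_getElem h₁ i hi1]
      exact (p₁.getElem (by omega)).symm
    have e2 : q₂[i] = y[q₂.length - 1 - i]'(by omega) := by
      rw [pal_getElem h₂ i hi2]
      exact (p₂.getElem (by omega)).symm
    rw [e1, e2, getElem_idx_congr y (show q₁.length - 1 - i = q₂.length - 1 - i by omega)]

/-- L1: overlap lemma. -/
theorem palindromic_suffix_of_palindrome {y q : List A} (hq : q.reverse = q)
    (hp : y <+: q) (hlt : q.length < 2 * y.length) :
    (y.drop (q.length - y.length)).reverse = y.drop (q.length - y.length) := by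
  have hn : y.length ≤ q.length := hp.length_le
  set N := q.length with hN
  set n := y.length with hn'
  have key : ∀ i (_ : N - n ≤ i) (_ : i < n), y[i]'(by omega) = y[N - 1 - i]'(by omega) := by
    intro i h1 h2
    have e1 : y[i]'(by omega) = q[i]'(by omega) := hp.getElem (by omega)
    have e2 : y[N - 1 - i]'(by omega) = q[N - 1 - i]'(by omega) := hp.getElem (by omega)
    have e3 : q[i]'(by omega) = q[N - 1 - i]'(by omega) := pal_getElem hq i (by omega)
    rw [e1, e3, ← e2]
  apply List.ext_getElem (by simp)
  intro j hj1 hj2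
  simp only [List.length_reverse, List.length_drop] at hj1 hj2
  rw [List.getElem_reverse, List.getElem_drop, List.getElem_drop]
  simp only [List.length_drop]
  have k1 := key (N - n + j) (by omega) (by omega)
  rw [k1]
  exact getElem_idx_congr y (by omega) _
end PalLemmas
section Decomp
variable {A : Type*}

theorem sandwich_palindrome {s : List A} (hs : s.reverse = s) (t : List A) :
    (t ++ s ++ t.reverse).reverse = t ++ s ++ t.reverse := by
  simp [List.reverse_append, hs, List.append_assoc]

theorem palPlus_lt {w : List A} (hw : w ≠ []) :
    (palPlus w).length < 2 * w.length := by
  obtain ⟨w₀, a, rfl⟩ := (List.eq_nil_or_concat w).resolve_left hw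
  have hq : ((w₀ ++ [a] ++ w₀.reverse) : List A).reverse = w₀ ++ [a] ++ w₀.reverse :=
    sandwich_palindrome (by simp) w₀
  have := palPlus_min (w₀ ++ [a]) hq ⟨w₀.reverse, by simp⟩
  simp at this ⊢
  omega

theorem palPlus_decomp {w : List A} (hw : w ≠ []) :
    ∃ t s : List A, w = t ++ s ∧ s.reverse = s ∧ s ≠ [] ∧
      palPlus w = t ++ s ++ t.reverse ∧
      ∀ s' : List A, s'.reverse = s' → s' <:+ w → s'.length ≤ s.length := by
  have hpre := palPlus_prefix w
  have hlen : w.length ≤ (palPlus w).length := hpre.length_le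
  have hlt := palPlus_lt hw
  set k := (palPlus w).length - w.length with hk
  refine ⟨w.take k, w.drop k, (List.take_append_drop _ w).symm, ?_, ?_, ?_, ?_⟩
  · exact palindromic_suffix_of_palindrome (palPlus_palindrome w) hpre hlt
  · intro h
    have := congrArg List.length h
    simp at this
    omega
  · have hsp : (w.drop k).reverse = w.drop k :=
      palindromic_suffix_of_palindrome (palPlus_palindrome w) hpre hlt
    have hq2 : (w.take k ++ w.drop k ++ (w.take k).reverse).reverse
        = w.take k ++ w.drop k ++ (w.take k).reverse := sandwich_palindrome hsp _
    refine palindrome_unique (palPlus_palindrome w) hq2 hpre ?_ ?_ (by omega)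
    · conv_lhs => rw [← List.take_append_drop k w]
      exact ⟨_, rfl⟩
    · simp
      omega
  · intro s' hs'p hs's
    obtain ⟨r, hr⟩ := hs's
    have hq := sandwich_palindrome hs'p r
    have := palPlus_min w hq (by rw [← hr]; exact ⟨r.reverse, by simp⟩)
    have hrl := congrArg List.length hr
    simp at this hrl ⊢
    omega

end Decomp
section Decode
variable {A : Type*} [DecidableEq A]

theorem my_prefix_of_prefix {x y z : List A} (h1 : x <+: z) (h2 : y <+: z)
    (h : x.length ≤ y.length) : x <+: y := by
  obtain ⟨t1, rfl⟩ := h1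
  obtain ⟨t2, ht⟩ := h2
  have hx : x = (x ++ t1).take x.length := by simp
  rw [hx, ← ht, List.take_append, Nat.sub_eq_zero_of_le h]
  simp
  exact List.take_prefix _ _

theorem my_suffix_of_suffix {x y z : List A} (h1 : x <:+ z) (h2 : y <:+ z)
    (h : x.length ≤ y.length) : x <:+ y := by
  rw [← List.reverse_prefix] at h1 h2 ⊢
  exact my_prefix_of_prefix h1 h2 (by simpa using h)

theorem suffix_split {z X Y : List A} (hz : z <:+ X ++ Y) :
    z <:+ Y ∨ (∃ x', x' <:+ X ∧ z = x' ++ Y) := by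
  by_cases hl : z.length ≤ Y.length
  · exact Or.inl (my_suffix_of_suffix hz (List.suffix_append X Y) hl)
  · right
    push_neg at hl
    obtain ⟨x', hx'⟩ := my_suffix_of_suffix (List.suffix_append X Y) hz hl.le
    obtain ⟨r, hr⟩ := hz
    refine ⟨x', ⟨r, ?_⟩, hx'.symm⟩
    rw [← hx'] at hr
    rw [← List.append_assoc] at hr
    exact List.append_cancel_right hr

theorem decode_snoc (b : A) : ∀ (w z z' : List A), z <:+ psiL b w ++ [b] →
    z = b :: z' → ∃ s', s' <:+ w ∧ z = psiL b s' ++ [b] := by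
  intro w
  induction w with
  | nil =>
    intro z z' hz he
    subst he
    rw [psiL_nil, List.nil_append] at hz
    rcases List.suffix_cons_iff.mp hz with h | h
    · have h1 : z' = [] := by injection h
      subst h1
      exact ⟨[], List.nil_suffix, by simp [psiL_nil]⟩
    · exact absurd (List.eq_nil_of_suffix_nil h) (by simp)
  | cons c w ih =>
    intro z z' hz he
    rw [psiL_cons, List.append_assoc] at hz
    rcases suffix_split hz with h | ⟨x', hx', rfl⟩
    · obtain ⟨s', hs1, hs2⟩ := ih z z' h he
      exact ⟨s', hs1.trans (List.suffix_cons c w), hs2⟩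
    · by_cases hc : c = b
      · subst hc
        simp only [if_pos rfl] at hx'
        rcases List.suffix_cons_iff.mp hx' with rfl | hx'
        · exact ⟨c :: w, List.suffix_refl _, by rw [psiL_cons, if_pos rfl]; simp⟩
        · have : x' = [] := List.eq_nil_of_suffix_nil hx'
          subst this
          exact ⟨w, List.suffix_cons c w, by simp⟩
      · simp only [if_neg hc] at hx'
        rcases List.suffix_cons_iff.mp hx' with rfl | hx'
        · exact ⟨c :: w, List.suffix_refl _, by rw [psiL_cons, if_neg hc]; simp⟩
        · rcases List.suffix_cons_iff.mp hx' with rfl | hx'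
          · rw [List.cons_append] at he
            exact absurd (List.head_eq_of_cons_eq he) hc
          · have : x' = [] := List.eq_nil_of_suffix_nil hx'
            subst this
            exact ⟨w, List.suffix_cons c w, by simp⟩

theorem decode_nonb (b : A) : ∀ (w z : List A) (c : A) (z' : List A),
    z <:+ psiL b w → z = c :: z' → c ≠ b →
    ∃ s', s' <:+ w ∧ s' ≠ [] ∧ b :: z = psiL b s' := by
  intro w
  induction w with
  | nil =>
    intro z c z' hz he hc
    rw [psiL_nil] at hz
    have := List.eq_nil_of_suffix_nil hz
    subst this
    exact absurd he (by simp)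
  | cons d w ih =>
    intro z c z' hz he hc
    rw [psiL_cons] at hz
    rcases suffix_split hz with h | ⟨x', hx', rfl⟩
    · obtain ⟨s', h1, h2, h3⟩ := ih z c z' h he hc
      exact ⟨s', h1.trans (List.suffix_cons d w), h2, h3⟩
    · by_cases hd : d = b
      · simp only [if_pos hd] at hx'
        rcases List.suffix_cons_iff.mp hx' with rfl | hx'
        · rw [List.cons_append] at he
          exact absurd (List.head_eq_of_cons_eq he).symm hc
        · have hx0 : x' = [] := List.eq_nil_of_suffix_nil hx'
          subst hx0
          rw [List.nil_append] at he ⊢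
          obtain ⟨s', h1, h2, h3⟩ := ih (psiL b w) c z' (List.suffix_refl _) he hc
          exact ⟨s', h1.trans (List.suffix_cons d w), h2, h3⟩
      · simp only [if_neg hd] at hx'
        rcases List.suffix_cons_iff.mp hx' with rfl | hx'
        · rw [List.cons_append] at he
          exact absurd (List.head_eq_of_cons_eq he).symm hc
        · rcases List.suffix_cons_iff.mp hx' with rfl | hx'
          · refine ⟨d :: w, List.suffix_refl _, by simp, ?_⟩
            rw [psiL_cons, if_neg hd]
            simp
          · have hx0 : x' = [] := List.eq_nil_of_suffix_nil hx'
            subst hx0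
            rw [List.nil_append] at he ⊢
            obtain ⟨s', h1, h2, h3⟩ := ih (psiL b w) c z' (List.suffix_refl _) he hc
            exact ⟨s', h1.trans (List.suffix_cons d w), h2, h3⟩

end Decode
section Crux
variable {A : Type*} [DecidableEq A]

theorem psiL_reverse_length (b : A) (t : List A) :
    (psiL b t.reverse).length = (psiL b t).length := by
  have h := congrArg List.length (psiL_reverse b t)
  rw [List.length_reverse, psibarL_length_eq] at h
  exact (congrArg List.length (by rfl : psiL b t.reverse = psiL b t.reverse)).trans h.symm

theorem psiL_suffix_length_le (b : A) {s' s : List A} (h : s' <:+ s) :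
    (psiL b s').length ≤ (psiL b s).length := by
  obtain ⟨r, rfl⟩ := h
  rw [psiL_append, List.length_append]
  omega

theorem psiL_length_pos (b : A) {s : List A} (hs : s ≠ []) :
    1 ≤ (psiL b s).length := by
  have := psiL_ne_nil b hs
  cases h : psiL b s with
  | nil => exact absurd h this
  | cons c l => simp

/-- CRUX A : `(ψ_b(w)b)⁺ = ψ_b(w⁺)b` for nonempty w. -/
theorem crux_A (b : A) {w : List A} (hw : w ≠ []) :
    palPlus (psiL b w ++ [b]) = psiL b (palPlus w) ++ [b] := by
  obtain ⟨t, s, hw_eq, hs_pal, hs_ne, hP_eq, hs_max⟩ := palPlus_decomp hw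
  have hs_suf : s <:+ w := ⟨t, hw_eq.symm⟩
  set y := psiL b w ++ [b] with hy
  set R := psiL b (palPlus w) ++ [b] with hR
  have hR_pal : R.reverse = R := psiL_snoc_palindrome b (palPlus_palindrome w)
  have hR_pre : y <+: R := by
    obtain ⟨r, hr⟩ := palPlus_prefix w
    rcases eq_or_ne r [] with rfl | hrne
    · rw [hR, ← hr]
      simp [hy]
    · obtain ⟨rest, hrest⟩ := psiL_head b hrne
      rw [hR, ← hr, psiL_append, hrest, hy]
      refine ⟨rest ++ [b], by simp⟩
  -- length bookkeeping
  have hlen1 : (psiL b w).length = (psiL b t).length + (psiL b s).length := by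
    rw [hw_eq, psiL_append, List.length_append]
  have hlen2 : R.length = 2 * (psiL b t).length + (psiL b s).length + 1 := by
    rw [hR, hP_eq, psiL_append, psiL_append]
    simp [psiL_reverse_length]
    omega
  have hsl : 1 ≤ (psiL b s).length := psiL_length_pos b hs_ne
  have hyl : y.length = (psiL b w).length + 1 := by simp [hy]
  have hRle : R.length + (psiL b s).length + 1 = 2 * y.length := by omega
  -- minimality
  have hmin : ∀ q : List A, q.reverse = q → y <+: q → R.length ≤ q.length := by
    intro q hq hyq
    by_contra hlt
    push_neg at hlt
    have h2y : q.length < 2 * y.length := by omega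
    have hsq_pal := palindromic_suffix_of_palindrome hq hyq h2y
    set sq := y.drop (q.length - y.length) with hsq
    have hsq_suf : sq <:+ y := List.drop_suffix _ _
    have hsq_len : sq.length = 2 * y.length - q.length := by
      have := hyq.length_le
      simp [hsq]
      omega
    have hsq_ne : sq ≠ [] := by
      intro h
      rw [h] at hsq_len
      have := hyq.length_le
      simp at hsq_len
      omega
    -- sq ends with b hence (palindrome) starts with b
    obtain ⟨x'', hx''⟩ : ∃ x'', sq = x'' ++ [b] := by
      rcases suffix_split (hy ▸ hsq_suf) with h | ⟨x', hx', h⟩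
      · rcases List.suffix_cons_iff.mp h with h | h
        · exact ⟨[], by simpa using h⟩
        · exact absurd (List.eq_nil_of_suffix_nil h) hsq_ne
      · exact ⟨x', h⟩
    have hsq_cons : sq = b :: x''.reverse := by
      conv_lhs => rw [← hsq_pal, hx'']
      simp
    obtain ⟨s', hs'_suf, hs'_eq⟩ := decode_snoc b w sq x''.reverse (hy ▸ hsq_suf) hsq_cons
    have hs'_pal : s'.reverse = s' := by
      apply palindrome_of_psiL_snoc b
      rw [← hs'_eq, hsq_pal]
    have hs'_le := hs_max s' hs'_pal hs'_suf
    have hss : (psiL b s').length ≤ (psiL b s).length :=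
      psiL_suffix_length_le b (my_suffix_of_suffix hs'_suf hs_suf hs'_le)
    have hsq_len2 : sq.length = (psiL b s').length + 1 := by
      rw [hs'_eq]
      simp
    omega
  -- conclude
  have hle1 := palPlus_min y hR_pal hR_pre
  have hge1 := hmin (palPlus y) (palPlus_palindrome y) (palPlus_prefix y)
  exact palindrome_unique (palPlus_palindrome y) hR_pal (palPlus_prefix y) hR_pre
    (by omega) (by omega)

/-- CRUX B : `(ψ_b(pa))⁺ = ψ_b((pa)⁺)b` for a ≠ b. -/
theorem crux_B (b a : A) (hab : a ≠ b) (p : List A) :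
    palPlus (psiL b (p ++ [a])) = psiL b (palPlus (p ++ [a])) ++ [b] := by
  set w := p ++ [a] with hwdef
  have hw : w ≠ [] := by simp [hwdef]
  obtain ⟨t, s, hw_eq, hs_pal, hs_ne, hP_eq, hs_max⟩ := palPlus_decomp hw
  have hs_suf : s <:+ w := ⟨t, hw_eq.symm⟩
  set y := psiL b w with hy
  set R := psiL b (palPlus w) ++ [b] with hR
  have hR_pal : R.reverse = R := psiL_snoc_palindrome b (palPlus_palindrome w)
  have hR_pre : y <+: R := by
    obtain ⟨r, hr⟩ := palPlus_prefix w
    rw [hR, ← hr, psiL_append, hy, List.append_assoc]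
    exact ⟨psiL b r ++ [b], rfl⟩
  -- length bookkeeping
  have hlen1 : (psiL b w).length = (psiL b t).length + (psiL b s).length := by
    rw [hw_eq, psiL_append, List.length_append]
  have hlen2 : R.length = 2 * (psiL b t).length + (psiL b s).length + 1 := by
    rw [hR, hP_eq, psiL_append, psiL_append]
    simp [psiL_reverse_length]
    omega
  -- s ends with a, so ψ_b s has length ≥ 2
  have hs_last : ∃ s₀, s = s₀ ++ [a] := by
    rcases suffix_split (hwdef ▸ hs_suf) with h | ⟨x', hx', h⟩
    · rcases List.suffix_cons_iff.mp h with h | h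
      · exact ⟨[], by simpa using h⟩
      · exact absurd (List.eq_nil_of_suffix_nil h) hs_ne
    · exact ⟨x', h⟩
  have hsl : 2 ≤ (psiL b s).length := by
    obtain ⟨s₀, rfl⟩ := hs_last
    rw [psiL_append, psiL_cons, if_neg hab, List.length_append]
    simp [psiL_nil]
  have hyl : y.length = (psiL b w).length := by simp [hy]
  have hRle : R.length + (psiL b s).length = 2 * y.length + 1 := by omega
  -- minimality
  have hmin : ∀ q : List A, q.reverse = q → y <+: q → R.length ≤ q.length := by
    intro q hq hyq
    by_contra hlt
    push_neg at hlt
    have h2y : q.length < 2 * y.length := by omega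
    have hsq_pal := palindromic_suffix_of_palindrome hq hyq h2y
    set sq := y.drop (q.length - y.length) with hsq
    have hsq_suf : sq <:+ y := List.drop_suffix _ _
    have hsq_len : sq.length = 2 * y.length - q.length := by
      have := hyq.length_le
      simp [hsq]
      omega
    have hsq_ne : sq ≠ [] := by
      intro h
      rw [h] at hsq_len
      have := hyq.length_le
      simp at hsq_len
      omega
    -- sq ends with a hence (palindrome) starts with a
    have hy_split : y = (psiL b p ++ [b]) ++ [a] := by
      rw [hy, hwdef, psiL_append, psiL_cons, if_neg hab]
      simp [psiL_nil]
    obtain ⟨x'', hx''⟩ : ∃ x'', sq = x'' ++ [a] := by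
      rcases suffix_split (hy_split ▸ hsq_suf) with h | ⟨x', hx', h⟩
      · rcases List.suffix_cons_iff.mp h with h | h
        · exact ⟨[], by simpa using h⟩
        · exact absurd (List.eq_nil_of_suffix_nil h) hsq_ne
      · exact ⟨x', h⟩
    have hsq_cons : sq = a :: x''.reverse := by
      conv_lhs => rw [← hsq_pal, hx'']
      simp
    obtain ⟨s', hs'_suf, hs'_ne, hs'_eq⟩ :=
      decode_nonb b w sq a x''.reverse hsq_suf hsq_cons hab
    have hs'_pal : s'.reverse = s' := by
      apply palindrome_of_psiL_snoc b
      rw [← hs'_eq]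
      show (b :: sq ++ [b]).reverse = b :: sq ++ [b]
      rw [List.cons_append, List.reverse_cons, List.reverse_append, hsq_pal]
      simp
    have hs'_le := hs_max s' hs'_pal hs'_suf
    have hss : (psiL b s').length ≤ (psiL b s).length :=
      psiL_suffix_length_le b (my_suffix_of_suffix hs'_suf hs_suf hs'_le)
    have hsq_len2 : sq.length + 1 = (psiL b s').length := by
      have := congrArg List.length hs'_eq
      simpa using this
    omega
  -- conclude
  have hle1 := palPlus_min y hR_pal hR_pre
  have hge1 := hmin (palPlus y) (palPlus_palindrome y) (palPlus_prefix y)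
  exact palindrome_unique (palPlus_palindrome y) hR_pal (palPlus_prefix y) hR_pre
    (by omega) (by omega)

end Crux
section PalPsi
variable {A : Type*} [DecidableEq A]

theorem pal_nil : (pal ([] : List A)) = [] := rfl

theorem pal_snoc (u : List A) (a : A) : pal (u ++ [a]) = palPlus (pal u ++ [a]) := by
  simp [pal, List.foldl_append]

theorem psiW_nil (x : List A) : psiW ([] : List A) x = x := rfl

theorem psiW_cons (c : A) (u x : List A) : psiW (c :: u) x = psiL c (psiW u x) := rfl

theorem psiW_append_w (u v x : List A) : psiW (u ++ v) x = psiW u (psiW v x) := by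
  induction u with
  | nil => rfl
  | cons c u ih => rw [List.cons_append, psiW_cons, psiW_cons, ih]

theorem psiW_hom (u x y : List A) : psiW u (x ++ y) = psiW u x ++ psiW u y := by
  induction u with
  | nil => rfl
  | cons c u ih => rw [psiW_cons, psiW_cons, psiW_cons, ih, psiL_append]

theorem psiW_ne_nil (u : List A) {x : List A} (hx : x ≠ []) : psiW u x ≠ [] := by
  induction u with
  | nil => exact hx
  | cons c u ih => exact psiL_ne_nil c ih

/-- Lemma J : Pal(b·v) = ψ_b(Pal(v))·b -/
theorem pal_cons (b : A) (v : List A) : pal (b :: v) = psiL b (pal v) ++ [b] := by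
  induction v using List.reverseRecOn with
  | nil =>
    show pal ([] ++ [b]) = _
    rw [pal_snoc, pal_nil, psiL_nil]
    simp [palPlus_singleton]
  | append_singleton v a ih =>
    have h1 : b :: (v ++ [a]) = (b :: v) ++ [a] := rfl
    rw [h1, pal_snoc, ih, pal_snoc]
    by_cases hab : a = b
    · rw [hab]
      have h2 : psiL b (pal v) ++ [b] ++ [b] = psiL b (pal v ++ [b]) ++ [b] := by
        rw [psiL_append, psiL_cons, if_pos rfl, psiL_nil]
        simp
      rw [h2, crux_A b (by simp : pal v ++ [b] ≠ [])]
    · have h2 : psiL b (pal v) ++ [b] ++ [a] = psiL b (pal v ++ [a]) := by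
        rw [psiL_append, psiL_cons, if_neg hab, psiL_nil]
        simp
      rw [h2, crux_B b a hab (pal v)]

/-- Justin's formula : ψ_u(a)·Pal(u) = Pal(u·a) -/
theorem justin (u : List A) (a : A) : psiW u [a] ++ pal u = pal (u ++ [a]) := by
  induction u generalizing a with
  | nil =>
    rw [psiW_nil, pal_nil]
    show [a] = pal ([] ++ [a])
    rw [pal_snoc, pal_nil]
    simp [palPlus_singleton]
  | cons c u ih =>
    rw [psiW_cons, pal_cons, ← List.append_assoc, ← psiL_append, ih a,
      show (c :: u) ++ [a] = c :: (u ++ [a]) from rfl, pal_cons]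

theorem pal_prefix_snoc (u : List A) (a : A) : pal u ++ [a] <+: pal (u ++ [a]) := by
  rw [pal_snoc]
  exact palPlus_prefix _

theorem psiW_singleton_last (u : List A) (c : A) : ∃ y, psiW u [c] = y ++ [c] := by
  induction u with
  | nil => exact ⟨[], rfl⟩
  | cons d u ih =>
    obtain ⟨y, hy⟩ := ih
    rw [psiW_cons, hy, psiL_append, psiL_cons]
    by_cases h : c = d
    · exact ⟨psiL d y, by simp [h, psiL_nil]⟩
    · exact ⟨psiL d y ++ [d], by simp [h, psiL_nil]⟩

end PalPsi

section Norm
variable {A : Type*} [DecidableEq A] [Fintype A]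

theorem psiW_norm (u : List A) :
    (∑ a : A, (psiW u [a]).length) =
      (Fintype.card A - 1) * (pal u).length + Fintype.card A := by
  induction u using List.reverseRecOn with
  | nil => simp [psiW_nil, pal_nil, Finset.card_univ]
  | append_singleton u d ih =>
    have hval : ∀ a : A, (psiW (u ++ [d]) [a]).length =
        if a = d then (psiW u [d]).length
        else (psiW u [d]).length + (psiW u [a]).length := by
      intro a
      rw [psiW_append_w]
      show (psiW u (psiL d [a])).length = _
      rw [psiL_cons, psiL_nil]
      by_cases h : a = d
      · simp [h]
      · rw [if_neg h, if_neg h]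
        have h2 : ([d] ++ [a] : List A) = [d, a] := rfl
        rw [List.append_nil, ← h2, psiW_hom, List.length_append]
    have hL : (pal (u ++ [d])).length = (psiW u [d]).length + (pal u).length := by
      rw [← justin u d, List.length_append]
    set k := Fintype.card A with hk
    have hk1 : 1 ≤ k := by
      rw [hk]
      exact Fintype.card_pos_iff.mpr ⟨d⟩
    set m := (psiW u [d]).length with hm
    set L := (pal u).length with hL0
    have key : (∑ a : A, (psiW (u ++ [d]) [a]).length) + m
        = ∑ a : A, (m + (psiW u [a]).length) := by
      rw [← Finset.sum_erase_add _ _ (Finset.mem_univ d),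
        ← Finset.sum_erase_add _ (fun a => m + (psiW u [a]).length) (Finset.mem_univ d)]
      have hcg : ∀ a ∈ Finset.univ.erase d, (psiW (u ++ [d]) [a]).length
          = m + (psiW u [a]).length := by
        intro a ha
        rw [hval a, if_neg (Finset.ne_of_mem_erase ha)]
      rw [Finset.sum_congr rfl hcg, hval d, if_pos rfl]
      omega
    have hdist : (∑ a : A, (m + (psiW u [a]).length)) = k * m + ∑ a : A, (psiW u [a]).length := by
      rw [Finset.sum_add_distrib, Finset.sum_const, Finset.card_univ, ← hk, smul_eq_mul]
    rw [hdist, ih] at key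
    rw [hL, Nat.mul_add]
    have ekm : k * m = (k - 1) * m + m := by
      conv_lhs => rw [show k = (k - 1) + 1 by omega]
      rw [Nat.succ_mul]
    rw [ekm] at key
    set Y := (k - 1) * m
    set X := (k - 1) * L
    omega

end Norm
section Lang
variable {A : Type*}

theorem langS_infix_closed {σ : List A → List A} {x y : List A}
    (hx : x ∈ LangS σ) (hyx : y <:+: x) : y ∈ LangS σ := by
  obtain ⟨n, a, h⟩ := hx
  exact ⟨n, a, hyx.trans h⟩

theorem iterate_hom {σ : List A → List A} (h : IsListHom σ) (n : ℕ) :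
    IsListHom (σ^[n]) := by
  induction n with
  | zero => intro x y; simp
  | succ n ih =>
    intro x y
    rw [Function.iterate_succ_apply', Function.iterate_succ_apply',
      Function.iterate_succ_apply', ih x y, h]

theorem hom_ne_nil {σ : List A → List A} (h : IsListHom σ)
    (hl : ∀ c : A, σ [c] ≠ []) {z : List A} (hz : z ≠ []) : σ z ≠ [] := by
  cases z with
  | nil => exact absurd rfl hz
  | cons c z =>
    rw [show (c :: z) = [c] ++ z from rfl, h]
    exact fun hc => hl c (List.append_eq_nil_iff.mp hc).1

theorem iter_ne_nil {σ : List A → List A} (h : IsListHom σ)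
    (hl : ∀ c : A, σ [c] ≠ []) (n : ℕ) {z : List A} (hz : z ≠ []) : σ^[n] z ≠ [] := by
  induction n generalizing z with
  | zero => exact hz
  | succ n ih =>
    rw [Function.iterate_succ_apply]
    exact ih (hom_ne_nil h hl hz)

theorem langS_map {σ : List A → List A} (h : IsListHom σ) {x : List A}
    (hx : x ∈ LangS σ) : σ x ∈ LangS σ := by
  obtain ⟨n, a, p, q, hpq⟩ := hx
  refine ⟨n + 1, a, σ p, σ q, ?_⟩
  rw [Function.iterate_succ_apply', ← hpq, h, h]

theorem langS_of_prefix {σ : List A → List A} {x y : List A}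
    (hx : x ∈ LangS σ) (hyx : y <+: x) : y ∈ LangS σ :=
  langS_infix_closed hx hyx.isInfix

/-- Right extendability in the language of a primitive substitution. -/
theorem langS_ext_right {σ : List A → List A} (h : IsListHom σ)
    (hl : ∀ c : A, σ [c] ≠ []) (hprim : IsPrimitiveSubst σ)
    (hA2 : ∀ a : A, ∃ b : A, b ≠ a)
    {x : List A} (hx : x ∈ LangS σ) : ∃ d : A, x ++ [d] ∈ LangS σ := by
  obtain ⟨n, a, p, q, hpq⟩ := hx
  rcases q with _ | ⟨d, q'⟩
  swap
  · exact ⟨d, n, a, p, q', by rw [← hpq]; simp⟩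
  -- x is a suffix of σ^[n] [a]; find N with σ^[N] [a] = P ++ [a] ++ S, S ≠ []
  obtain ⟨k, hk1, hk⟩ := hprim
  obtain ⟨N, P, S, hS, hNdec⟩ :
      ∃ (N : ℕ) (P S : List A), S ≠ [] ∧ σ^[N] [a] = P ++ [a] ++ S := by
    obtain ⟨P, S, hPS⟩ := List.append_of_mem (hk a a)
    rcases S with _ | ⟨e, S'⟩
    · -- a occurs only at the end: use 2k
      obtain ⟨b, hb⟩ := hA2 a
      have hbmem : b ∈ σ^[k] [a] := hk a b
      rw [hPS] at hbmem
      simp at hbmem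
      rcases hbmem with hbP | hba
      swap
      · exact absurd hba hb
      obtain ⟨P₁, P₂, hP⟩ := List.append_of_mem hbP
      have h2k : σ^[2 * k] [a] = σ^[k] (σ^[k] [a]) := by
        rw [two_mul, Function.iterate_add_apply]
      obtain ⟨Q, R, hQR⟩ := List.append_of_mem (hk b a)
      refine ⟨2 * k, σ^[k] P₁ ++ Q, R ++ σ^[k] (P₂ ++ [a] ++ []), ?_, ?_⟩
      · intro hcon
        have : σ^[k] (P₂ ++ [a] ++ []) = [] := (List.append_eq_nil_iff.mp hcon).2
        exact iter_ne_nil h hl k (by simp) this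
      · rw [h2k, hPS, hP]
        have e1 : P₁ ++ b :: P₂ ++ [a] = P₁ ++ ([b] ++ (P₂ ++ [a] ++ [])) := by simp
        rw [e1, iterate_hom h k, iterate_hom h k, hQR]
        simp
    · exact ⟨k, P, e :: S', by simp, by rw [hPS]; simp⟩
  -- now extend
  have hiter : σ^[n + N] [a] = σ^[n] P ++ (p ++ x) ++ σ^[n] S := by
    rw [Function.iterate_add_apply, hNdec, iterate_hom h n, iterate_hom h n, ← hpq]
    simp
  have hSne : σ^[n] S ≠ [] := iter_ne_nil h hl n hS
  rcases hd : σ^[n] S with _ | ⟨d, S''⟩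
  · exact absurd hd hSne
  refine ⟨d, n + N, a, σ^[n] P ++ p, S'', ?_⟩
  rw [hiter, hd]
  simp
end Lang

/-- (1) if (|A|-1)·(|w|+|σ(a_min)|) = ‖σ‖-|A| then σ(v·a_min) is right
special for every right special v; (2) if w = ε then σ(v·a_min) ∈ L(σ) and is left
special for every left special v. -/
theorem image_of_special_with_minletter_right {A : Type*} [Fintype A] [DecidableEq A]
    (hA : 1 < Fintype.card A) (u : List A) (hu : u ≠ []) (π : Equiv.Perm A)
    (w : List A) (hw : w <+: pal u)
    (σ : List A → List A) (hσhom : IsListHom σ)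
    (hσ : ∀ a : A, psiW u [π a] ++ w = w ++ σ [a])
    (hprim : IsPrimitiveSubst σ)
    (amin : A) (hmin : ∀ a : A, a ≠ amin → (σ [amin]).length < (σ [a]).length) :
    ((Fintype.card A - 1) * (w.length + (σ [amin]).length) =
        (∑ a : A, (σ [a]).length) - Fintype.card A →
      ∀ v : List A, RightSpecial (LangS σ) v →
        RightSpecial (LangS σ) (σ (v ++ [amin]))) ∧
    (w = [] →
      ∀ v : List A, LeftSpecial (LangS σ) v →
        σ (v ++ [amin]) ∈ LangS σ ∧ LeftSpecial (LangS σ) (σ (v ++ [amin]))) := by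
  classical
  have hA2 : ∀ a : A, ∃ b : A, b ≠ a := fun a => Fintype.exists_ne_of_one_lt_card hA a
  have hψσlen : ∀ a : A, (σ [a]).length = (psiW u [π a]).length := by
    intro a
    have := congrArg List.length (hσ a)
    simp at this
    omega
  have hσne : ∀ c : A, σ [c] ≠ [] := by
    intro c hc
    have h0 := hψσlen c
    rw [hc] at h0
    exact psiW_ne_nil u (by simp) (List.length_eq_zero_iff.mp h0.symm)
  have hsum : (∑ a : A, (σ [a]).length)
      = (Fintype.card A - 1) * (pal u).length + Fintype.card A := by
    have h1 : (∑ a : A, (σ [a]).length) = ∑ a : A, (psiW u [π a]).length :=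
      Finset.sum_congr rfl (fun a _ => hψσlen a)
    rw [h1, Equiv.sum_comp π (fun b => (psiW u [b]).length), psiW_norm u]
  obtain ⟨W, hW⟩ := hw
  have hF1 : ∀ a : A, W ++ [π a] <+: σ [a] ++ W := by
    intro a
    have h1 : pal u ++ [π a] <+: pal (u ++ [π a]) := pal_prefix_snoc u (π a)
    have h2 : pal (u ++ [π a]) = w ++ (σ [a] ++ W) := by
      rw [← justin u (π a), ← hW, ← List.append_assoc, hσ a, List.append_assoc]
    rw [h2, ← hW, List.append_assoc] at h1
    exact (List.prefix_append_right_inj w).mp h1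
  have hWlen : w.length + W.length = (pal u).length := by
    have := congrArg List.length hW
    simpa using this
  have hm1 : 1 ≤ (σ [amin]).length := List.length_pos_iff.mpr (hσne amin)
  constructor
  · -- Part (1): right special
    intro hcond v hv
    have hLw : w.length + (σ [amin]).length = (pal u).length := by
      rw [hsum, Nat.add_sub_cancel] at hcond
      have hk1 : 1 ≤ Fintype.card A - 1 := by omega
      exact Nat.eq_of_mul_eq_mul_left (by omega) hcond
    have hWm : W.length = (σ [amin]).length := by omega
    have hamin : σ [amin] = W := by
      obtain ⟨r, hr⟩ := hF1 amin
      rw [List.append_assoc] at hr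
      exact ((List.append_inj hr hWm).1).symm
    obtain ⟨W', hWhead⟩ : ∃ W', W = π amin :: W' := by
      have h1 := hF1 amin
      rw [hamin] at h1
      obtain ⟨r, hr⟩ := (List.prefix_append_right_inj W).mp h1
      exact ⟨r, hr.symm⟩
    have hpref : ∀ a : A, a ≠ amin → W ++ [π a] <+: σ [a] := by
      intro a ha
      have h1 := hF1 a
      have hlen : (W ++ [π a]).length ≤ (σ [a]).length := by
        have := hmin a ha
        simp
        omega
      exact my_prefix_of_prefix h1 (List.prefix_append _ _) hlen
    obtain ⟨x, y, hxy, hvx, hvy⟩ := hv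
    have key : ∀ e : A, v ++ [e] ∈ LangS σ → σ (v ++ [amin]) ++ [π e] ∈ LangS σ := by
      intro e he
      by_cases hce : e = amin
      · subst hce
        obtain ⟨d, hd⟩ := langS_ext_right hσhom hσne hprim hA2 he
        have h2 := langS_map hσhom hd
        rw [hσhom (v ++ [e]) [d]] at h2
        obtain ⟨r, hr⟩ : ∃ r, σ [d] = π e :: r := by
          by_cases hda : d = e
          · subst hda
            rw [hamin]
            exact ⟨W', hWhead⟩
          · obtain ⟨r', hr'⟩ := hpref d hda
            refine ⟨W' ++ [π d] ++ r', ?_⟩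
            rw [← hr', hWhead]
            simp
        rw [hr] at h2
        exact langS_of_prefix h2 ⟨r, by simp⟩
      · have h2 := langS_map hσhom he
        rw [hσhom v [e]] at h2
        obtain ⟨r, hr⟩ := hpref e hce
        rw [← hr] at h2
        refine langS_of_prefix h2 ?_
        rw [hσhom v [amin], hamin]
        exact ⟨r, by simp⟩
    exact ⟨π x, π y, fun hxyp => hxy (π.injective hxyp), key x hvx, key y hvy⟩
  · -- Part (2): left special
    intro hwnil v hv
    subst hwnil
    have hσ' : ∀ a, σ [a] = psiW u [π a] := by
      intro a
      have := hσ a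
      simpa using this.symm
    rw [List.nil_append] at hW
    have hmL : (σ [amin]).length ≤ (pal u).length := by
      by_contra hc
      push_neg at hc
      set k := Fintype.card A with hk
      set m := (σ [amin]).length with hm
      set L := (pal u).length with hL
      have hlow : (k - 1) * (m + 1) + m ≤ ∑ a : A, (σ [a]).length := by
        rw [← Finset.sum_erase_add _ _ (Finset.mem_univ amin)]
        have h1 : (k - 1) * (m + 1) ≤ ∑ a ∈ Finset.univ.erase amin, (σ [a]).length := by
          have hcard : (Finset.univ.erase amin).card = k - 1 := by
            rw [Finset.card_erase_of_mem (Finset.mem_univ amin), Finset.card_univ]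
          calc (k - 1) * (m + 1) = (Finset.univ.erase amin).card • (m + 1) := by
                rw [hcard, smul_eq_mul]
            _ ≤ ∑ a ∈ Finset.univ.erase amin, (σ [a]).length := by
                apply Finset.card_nsmul_le_sum
                intro a ha
                exact hmin a (Finset.ne_of_mem_erase ha)
        omega
      rw [hsum] at hlow
      have hmono : (k - 1) * (L + 2) ≤ (k - 1) * (m + 1) := by
        apply Nat.mul_le_mul_left
        omega
      have hexp : (k - 1) * (L + 2) = (k - 1) * L + (k - 1) * 2 := by ring
      set X := (k - 1) * L
      set Y := (k - 1) * (m + 1)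
      set Z := (k - 1) * 2
      omega
    have hamin_pre : σ [amin] <+: pal u := by
      have h1 : pal u <+: σ [amin] ++ pal u := by
        rw [hσ', justin]
        exact (List.prefix_append _ _).trans (pal_prefix_snoc u (π amin))
      exact my_prefix_of_prefix (List.prefix_append _ _) h1 hmL
    have hpre_all : ∀ e : A, σ [amin] <+: σ [e] := by
      intro e
      have h1 : pal u <+: σ [e] ++ pal u := by
        rw [hσ' e, justin]
        exact (List.prefix_append _ _).trans (pal_prefix_snoc u (π e))
      have h2 : σ [amin] <+: σ [e] ++ pal u := hamin_pre.trans h1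
      have hlen : (σ [amin]).length ≤ (σ [e]).length := by
        by_cases he0 : e = amin
        · rw [he0]
        · exact (hmin e he0).le
      exact my_prefix_of_prefix h2 (List.prefix_append _ _) hlen
    have hmem : σ (v ++ [amin]) ∈ LangS σ := by
      obtain ⟨x, y, hxy, hvx, hvy⟩ := hv
      have hvL : v ∈ LangS σ := langS_infix_closed hvx ⟨[x], [], by simp⟩
      obtain ⟨d, hd⟩ := langS_ext_right hσhom hσne hprim hA2 hvL
      have h2 := langS_map hσhom hd
      rw [hσhom v [d]] at h2
      obtain ⟨r, hr⟩ := hpre_all d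
      rw [← hr] at h2
      refine langS_of_prefix h2 ?_
      rw [hσhom v [amin]]
      exact ⟨r, by simp⟩
    refine ⟨hmem, ?_⟩
    obtain ⟨x, y, hxy, hvx, hvy⟩ := hv
    have key2 : ∀ e : A, e :: v ∈ LangS σ → π e :: σ (v ++ [amin]) ∈ LangS σ := by
      intro e he
      obtain ⟨d, hd⟩ := langS_ext_right hσhom hσne hprim hA2 he
      have h2 := langS_map hσhom hd
      obtain ⟨yel, hyel⟩ := psiW_singleton_last u (π e)
      obtain ⟨r, hr⟩ := hpre_all d
      have hsplit : σ ((e :: v) ++ [d]) = yel ++ (π e :: (σ v ++ σ [amin])) ++ r := by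
        rw [show (e :: v) ++ [d] = [e] ++ (v ++ [d]) by simp, hσhom, hσhom, hσ' e, hyel, ← hr]
        simp
      rw [hsplit] at h2
      have h3 : π e :: (σ v ++ σ [amin]) ∈ LangS σ := langS_infix_closed h2 ⟨yel, r, rfl⟩
      rw [hσhom v [amin]]
      exact h3
    exact ⟨π x, π y, fun hxyp => hxy (π.injective hxyp), key2 x hvx, key2 y hvy⟩
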